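/- arXiv:2503.00538 — 3 statements merged into one kernel-verified Lean document; each statement's English description precedes it below -/
import Mathlib

section
/- For all a, b, c > 0 and all p ∈ ℕ and all λ₁²,…,λ_p² > 0: ∫₀^∞ t^{p/2+a-1}/(c+t)^{a+b} · ∏_{k=1}^p 1/(λ_k²+t) dt = ∫₀^∞ t^{p/2+a-1}/(c+t)^{a+b} · ∏_{k=1}^p 1/(λ_k²+t) · (t/(p/2+a)) · ( (a+b)/(c+t) + Σ_{k=1}^p 1/(λ_k²+t) ) dt. -/
/-!
With `s = a + b`, `q = p/2 + a` and `F_r(t) = t^r (c+t)^{-s} ∏_k (λ_k + t)⁻¹`, logarithmic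
differentiation gives `F_q' = q F_{q-1} - F_q · (s/(c+t) + Σ_k (λ_k + t)⁻¹)`. Since `q > 0` and
`q - s - p = -(p/2 + b) < 0`, `F_q` vanishes at `0` and at `∞`, so integrating `F_q'` over `(0, ∞)`
gives `q ∫ F_{q-1} = ∫ F_q · (s/(c+t) + Σ_k (λ_k + t)⁻¹)`. Everything is integrable because
`F_{q-1}` is `O(t^{q-1})` at `0` and `O(t^{q-1-s-p})` at `∞`, and `t (s/(c+t) + Σ_k (λ_k + t)⁻¹)` is
bounded by `s + p`.
-/

open MeasureTheory Set Filter Topology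

theorem integrableOn_Ioi_zero_of_norm_le_rpow {f : ℝ → ℝ}
    (hf : AEStronglyMeasurable f (volume.restrict (Ioi 0))) {r₀ r₁ C₀ C₁ : ℝ}
    (hr₀ : -1 < r₀) (hr₁ : r₁ < -1)
    (h₀ : ∀ t ∈ Ioc (0 : ℝ) 1, ‖f t‖ ≤ C₀ * t ^ r₀)
    (h₁ : ∀ t ∈ Ioi (1 : ℝ), ‖f t‖ ≤ C₁ * t ^ r₁) :
    IntegrableOn f (Ioi 0) := by
  have hunion : Ioc (0 : ℝ) 1 ∪ Ioi 1 = Ioi 0 := Ioc_union_Ioi_eq_Ioi zero_le_one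
  rw [← hunion] at hf ⊢
  refine IntegrableOn.union ?_ ?_
  · have hpow : IntegrableOn (fun t : ℝ => t ^ r₀) (Ioc 0 1) :=
      (intervalIntegrable_iff_integrableOn_Ioc_of_le zero_le_one).1
        (intervalIntegral.intervalIntegrable_rpow' hr₀)
    exact (hpow.const_mul C₀).mono' (hf.mono_measure (Measure.restrict_mono subset_union_left le_rfl))
      ((ae_restrict_iff' measurableSet_Ioc).2 (ae_of_all _ h₀))
  · exact ((integrableOn_Ioi_rpow_of_lt hr₁ one_pos).const_mul C₁).mono'
      (hf.mono_measure (Measure.restrict_mono subset_union_right le_rfl))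
      ((ae_restrict_iff' measurableSet_Ioi).2 (ae_of_all _ h₁))

theorem integral_Ioi_eq_of_hasDerivAt_sub {F f g : ℝ → ℝ} {a : ℝ}
    (hcont : ContinuousWithinAt F (Ici a) a) (hderiv : ∀ t ∈ Ioi a, HasDerivAt F (f t - g t) t)
    (hf : IntegrableOn f (Ioi a)) (hg : IntegrableOn g (Ioi a))
    (htop : Tendsto F atTop (𝓝 (F a))) :
    ∫ t in Ioi a, f t = ∫ t in Ioi a, g t := by
  have h := integral_Ioi_of_hasDerivAt_of_tendsto hcont hderiv (hf.sub hg) htop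
  rwa [sub_self, integral_sub hf hg, sub_eq_zero] at h

noncomputable section

variable {ι : Type*} [Fintype ι] {lam : ι → ℝ} {c s q t : ℝ}

def prodInvShift (lam : ι → ℝ) (t : ℝ) : ℝ := ∏ k, (lam k + t)⁻¹

def sumInvShift (lam : ι → ℝ) (t : ℝ) : ℝ := ∑ k, (lam k + t)⁻¹

def powWeight (c s q : ℝ) (lam : ι → ℝ) (t : ℝ) : ℝ := t ^ q / (c + t) ^ s * prodInvShift lam t

theorem prodInvShift_pos (hlam : ∀ k, 0 < lam k) (ht : 0 ≤ t) : 0 < prodInvShift lam t :=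
  Finset.prod_pos fun k _ => inv_pos.2 (add_pos_of_pos_of_nonneg (hlam k) ht)

theorem prodInvShift_le_prodInvShift_zero (hlam : ∀ k, 0 < lam k) (ht : 0 ≤ t) :
    prodInvShift lam t ≤ prodInvShift lam 0 :=
  Finset.prod_le_prod (fun k _ => (inv_pos.2 (add_pos_of_pos_of_nonneg (hlam k) ht)).le)
    fun k _ => inv_anti₀ (by simpa using hlam k) (by simpa using ht)

theorem prodInvShift_le_rpow (hlam : ∀ k, 0 ≤ lam k) (ht : 0 < t) :
    prodInvShift lam t ≤ t ^ (-(Fintype.card ι : ℝ)) := by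
  calc prodInvShift lam t ≤ ∏ _k : ι, t⁻¹ :=
        Finset.prod_le_prod (fun k _ => (inv_pos.2 (add_pos_of_nonneg_of_pos (hlam k) ht)).le)
          fun k _ => inv_anti₀ ht (le_add_of_nonneg_left (hlam k))
    _ = t ^ (-(Fintype.card ι : ℝ)) := by
        rw [Finset.prod_const, Finset.card_univ, Real.rpow_neg ht.le, Real.rpow_natCast, inv_pow]

theorem mul_sumInvShift_le_card (hlam : ∀ k, 0 ≤ lam k) (ht : 0 ≤ t) :
    t * sumInvShift lam t ≤ Fintype.card ι := by
  calc t * sumInvShift lam t = ∑ k, t / (lam k + t) := by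
        simp only [sumInvShift, Finset.mul_sum, div_eq_mul_inv]
    _ ≤ ∑ _k : ι, 1 :=
        Finset.sum_le_sum fun k _ => div_le_one_of_le₀ (le_add_of_nonneg_left (hlam k))
          (add_nonneg (hlam k) ht)
    _ = Fintype.card ι := by simp

theorem hasDerivAt_prodInvShift (hlam : ∀ k, 0 < lam k) (ht : 0 ≤ t) :
    HasDerivAt (prodInvShift lam) (-(prodInvShift lam t * sumInvShift lam t)) t := by
  classical
  have hne k : lam k + t ≠ 0 := (add_pos_of_pos_of_nonneg (hlam k) ht).ne'
  have hfactor : ∀ k ∈ Finset.univ,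
      HasDerivAt (fun u => (lam k + u)⁻¹) (-1 / (lam k + t) ^ 2) t := fun k _ => by
    exact ((hasDerivAt_id t).const_add (lam k)).inv (hne k)
  refine (HasDerivAt.fun_finsetProd hfactor).congr_deriv ?_
  rw [sumInvShift, Finset.mul_sum, ← Finset.sum_neg_distrib]
  refine Finset.sum_congr rfl fun k _ => ?_
  rw [prodInvShift, ← Finset.mul_prod_erase _ _ (Finset.mem_univ k), smul_eq_mul]
  field_simp

theorem powWeight_nonneg (hc : 0 < c) (hlam : ∀ k, 0 < lam k) (ht : 0 ≤ t) :
    0 ≤ powWeight c s q lam t := by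
  unfold powWeight
  have := prodInvShift_pos hlam ht
  positivity

theorem powWeight_eq_mul_powWeight_sub_one (ht : 0 < t) :
    powWeight c s q lam t = t * powWeight c s (q - 1) lam t := by
  rw [powWeight, powWeight, ← sub_add_cancel q 1, Real.rpow_add_one ht.ne', sub_add_cancel]
  ring

theorem measurable_powWeight : Measurable (powWeight c s q lam) := by
  unfold powWeight prodInvShift
  fun_prop

theorem continuousAt_powWeight (hc : 0 < c) (hlam : ∀ k, 0 < lam k) (ht : 0 ≤ t)
    (hq : t ≠ 0 ∨ 0 ≤ q) : ContinuousAt (powWeight c s q lam) t := by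
  have hct : 0 < c + t := add_pos_of_pos_of_nonneg hc ht
  exact ((Real.continuousAt_rpow_const t q hq).div
    ((continuousAt_const.add continuousAt_id).rpow_const (Or.inl hct.ne'))
    (Real.rpow_pos_of_pos hct _).ne').mul (hasDerivAt_prodInvShift hlam ht).continuousAt

theorem hasDerivAt_powWeight (hc : 0 < c) (hlam : ∀ k, 0 < lam k) (ht : 0 < t) :
    HasDerivAt (powWeight c s q lam)
      (q * powWeight c s (q - 1) lam t
        - powWeight c s q lam t * (s / (c + t) + sumInvShift lam t)) t := by
  have hct : 0 < c + t := add_pos_of_pos_of_nonneg hc ht.le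
  have hnum : HasDerivAt (fun u : ℝ => u ^ q) (q * t ^ (q - 1)) t :=
    Real.hasDerivAt_rpow_const (Or.inl ht.ne')
  have hden : HasDerivAt (fun u : ℝ => (c + u) ^ s) (s * (c + t) ^ (s - 1)) t := by
    simpa using ((hasDerivAt_id t).const_add c).rpow_const (p := s) (Or.inl hct.ne')
  refine ((hnum.div hden (Real.rpow_pos_of_pos hct _).ne').mul
    (hasDerivAt_prodInvShift hlam ht.le)).congr_deriv ?_
  rw [Pi.div_apply, powWeight, powWeight, Real.rpow_sub_one hct.ne', ← sub_add_cancel q 1,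
    Real.rpow_add_one ht.ne', sub_add_cancel]
  field_simp
  ring

theorem powWeight_le_mul_rpow (hc : 0 < c) (hs : 0 ≤ s) (hlam : ∀ k, 0 < lam k) (ht : 0 ≤ t) :
    powWeight c s q lam t ≤ prodInvShift lam 0 / c ^ s * t ^ q := by
  have hden : c ^ s ≤ (c + t) ^ s := Real.rpow_le_rpow hc.le (le_add_of_nonneg_right ht) hs
  calc powWeight c s q lam t ≤ t ^ q / c ^ s * prodInvShift lam 0 :=
        mul_le_mul (div_le_div_of_nonneg_left (by positivity) (by positivity) hden)
          (prodInvShift_le_prodInvShift_zero hlam ht) (prodInvShift_pos hlam ht).le (by positivity)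
    _ = prodInvShift lam 0 / c ^ s * t ^ q := by ring

theorem powWeight_le_rpow (hc : 0 < c) (hs : 0 ≤ s) (hlam : ∀ k, 0 < lam k) (ht : 0 < t) :
    powWeight c s q lam t ≤ t ^ (q - s - Fintype.card ι) := by
  have hden : t ^ s ≤ (c + t) ^ s := Real.rpow_le_rpow ht.le (le_add_of_nonneg_left hc.le) hs
  calc powWeight c s q lam t ≤ t ^ q / t ^ s * t ^ (-(Fintype.card ι : ℝ)) :=
        mul_le_mul (div_le_div_of_nonneg_left (by positivity) (by positivity) hden)
          (prodInvShift_le_rpow (fun k => (hlam k).le) ht) (prodInvShift_pos hlam ht.le).le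
          (by positivity)
    _ = t ^ (q - s - Fintype.card ι) := by
        rw [← Real.rpow_sub ht, ← Real.rpow_add ht, ← sub_eq_add_neg]

theorem integrableOn_powWeight (hc : 0 < c) (hs : 0 ≤ s) (hlam : ∀ k, 0 < lam k)
    (hq : -1 < q) (hqs : q - s - Fintype.card ι < -1) :
    IntegrableOn (powWeight c s q lam) (Ioi 0) := by
  refine integrableOn_Ioi_zero_of_norm_le_rpow measurable_powWeight.aestronglyMeasurable hq hqs
    (C₀ := prodInvShift lam 0 / c ^ s) (C₁ := 1) (fun t ht => ?_) (fun t ht => ?_)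
  · rw [Real.norm_of_nonneg (powWeight_nonneg hc hlam ht.1.le)]
    exact powWeight_le_mul_rpow hc hs hlam ht.1.le
  · have ht₀ : (0 : ℝ) < t := one_pos.trans ht
    rw [Real.norm_of_nonneg (powWeight_nonneg hc hlam ht₀.le), one_mul]
    exact powWeight_le_rpow hc hs hlam ht₀

theorem tendsto_powWeight_atTop (hc : 0 < c) (hs : 0 ≤ s) (hlam : ∀ k, 0 < lam k)
    (hqs : q - s - Fintype.card ι < 0) : Tendsto (powWeight c s q lam) atTop (𝓝 0) := by
  have hpow : Tendsto (fun t : ℝ => t ^ (q - s - Fintype.card ι)) atTop (𝓝 0) := by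
    simpa using tendsto_rpow_neg_atTop (neg_pos.2 hqs)
  refine squeeze_zero' ?_ ?_ hpow
  · filter_upwards [eventually_ge_atTop 0] with t ht using powWeight_nonneg hc hlam ht
  · filter_upwards [eventually_gt_atTop 0] with t ht using powWeight_le_rpow hc hs hlam ht

theorem integrableOn_powWeight_mul (hc : 0 < c) (hs : 0 ≤ s) (hlam : ∀ k, 0 < lam k)
    (hq : 0 < q) (hqs : q < s + Fintype.card ι) :
    IntegrableOn (fun t => powWeight c s q lam t * (s / (c + t) + sumInvShift lam t)) (Ioi 0) := by
  have hint := (integrableOn_powWeight hc hs hlam (q := q - 1) (by linarith) (by linarith)).const_mul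
    (s + Fintype.card ι)
  have hmeas : Measurable fun t => powWeight c s q lam t * (s / (c + t) + sumInvShift lam t) := by
    unfold powWeight prodInvShift sumInvShift
    fun_prop
  refine hint.mono' hmeas.aestronglyMeasurable ((ae_restrict_iff' measurableSet_Ioi).2
    (ae_of_all _ fun t (ht : 0 < t) => ?_))
  have hct : 0 < c + t := add_pos_of_pos_of_nonneg hc ht.le
  have hsum : 0 ≤ sumInvShift lam t :=
    Finset.sum_nonneg fun k _ => (inv_pos.2 (add_pos_of_pos_of_nonneg (hlam k) ht.le)).le
  have hbound : t * (s / (c + t) + sumInvShift lam t) ≤ s + Fintype.card ι := by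
    have : t * (s / (c + t)) ≤ s := by
      rw [mul_div_assoc', div_le_iff₀ hct]
      nlinarith
    linarith [mul_sumInvShift_le_card (fun k => (hlam k).le) ht.le]
  rw [Real.norm_of_nonneg (mul_nonneg (powWeight_nonneg hc hlam ht.le) (by positivity)),
    powWeight_eq_mul_powWeight_sub_one ht, mul_comm t, mul_assoc, mul_comm (s + _)]
  exact mul_le_mul_of_nonneg_left hbound (powWeight_nonneg hc hlam ht.le)

theorem mul_integral_powWeight_sub_one (hc : 0 < c) (hs : 0 ≤ s) (hlam : ∀ k, 0 < lam k)
    (hq : 0 < q) (hqs : q < s + Fintype.card ι) :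
    q * ∫ t in Ioi 0, powWeight c s (q - 1) lam t
      = ∫ t in Ioi 0, powWeight c s q lam t * (s / (c + t) + sumInvShift lam t) := by
  rw [← integral_const_mul]
  refine integral_Ioi_eq_of_hasDerivAt_sub
    (continuousAt_powWeight hc hlam le_rfl (Or.inr hq.le)).continuousWithinAt
    (fun t ht => hasDerivAt_powWeight hc hlam ht)
    ((integrableOn_powWeight hc hs hlam (by linarith) (by linarith)).const_mul q)
    (integrableOn_powWeight_mul hc hs hlam hq hqs) ?_
  simpa [powWeight, Real.zero_rpow hq.ne'] using
    tendsto_powWeight_atTop hc hs hlam (by linarith)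

end

theorem stmt_2 (a b c : ℝ) (ha : 0 < a) (hb : 0 < b) (hc : 0 < c)
    (p : ℕ) (lam : Fin p → ℝ) (hlam : ∀ k, 0 < lam k) :
    (∫ t in Set.Ioi (0:ℝ), t ^ ((p:ℝ)/2 + a - 1) / (c + t) ^ (a + b) * ∏ k, 1 / (lam k + t))
      = ∫ t in Set.Ioi (0:ℝ), t ^ ((p:ℝ)/2 + a - 1) / (c + t) ^ (a + b) * (∏ k, 1 / (lam k + t))
          * (t / ((p:ℝ)/2 + a)) * ((a + b) / (c + t) + ∑ k, 1 / (lam k + t)) := by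
  have hq : 0 < (p : ℝ) / 2 + a := by positivity
  have key := mul_integral_powWeight_sub_one hc (add_pos ha hb).le hlam hq
    (by rw [Fintype.card_fin]; linarith [(Nat.cast_nonneg p : (0 : ℝ) ≤ p)])
  rw [← mul_right_inj' hq.ne']
  convert key using 2
  · simp only [powWeight, prodInvShift, one_div]
  · rw [← integral_const_mul]
    refine setIntegral_congr_fun measurableSet_Ioi fun t (ht : 0 < t) => ?_
    rw [powWeight_eq_mul_powWeight_sub_one ht]
    simp only [powWeight, prodInvShift, sumInvShift, one_div]
    field_simp
end

section
/- For a > 0, c > 0, fixed exponents A > 0 and B > a (with B − a > 0), and γ > 0: the ratio E(λ) := [∫₀^∞ (t/(γ+t))^{C} · t^{A−1}/(c+t)^{a+b} · (λ+t)^{−B} dt] / [∫₀^∞ t^{A−1}/(c+t)^{a+b} · (λ+t)^{−B} dt] tends to 0 as λ → 0⁺, where C = min{1, B − A}/2 ∈ (0,1) and all integrals are finite. In particular, in the notation of Lemma S-median, E[τ²/(γ+τ²) | λ̃²] → 0 as λ̃*² → 0. -/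
/-!
Since `(t / (γ + t)) ^ C ≤ γ ^ (-C) * t ^ C`, the numerator is at most `γ ^ (-C)` times the
denominator with `A` replaced by `A + C`. Substituting `t = λ u` turns
`∫ t ^ (α - 1) (c + t) ^ (-p) (λ + t) ^ (-B) dt` into `λ ^ (α - B) ∫ u ^ (α - 1) (c + λ u) ^ (-p)
(1 + u) ^ (-B) du`, and for `0 < λ ≤ 1` the last integral lies between its value at `λ = 1` and
`c ^ (-p) * B(α, B - α)`. Hence raising `α` by `C` costs a factor `O(λ ^ C)`, which tends to `0`.
-/

open MeasureTheory Set Filter Topology Asymptotics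

noncomputable def betaTypeIntegral (c p β α l : ℝ) : ℝ :=
  ∫ t in Ioi 0, t ^ (α - 1) / (c + t) ^ p * (l + t) ^ (-β)

section

variable {c p β α l : ℝ}

lemma integrableOn_rpow_mul_add_rpow_neg (hα : 0 < α) (hαβ : α < β) (hl : 0 < l) :
    IntegrableOn (fun t : ℝ => t ^ (α - 1) * (l + t) ^ (-β)) (Ioi 0) := by
  have hmeas : AEStronglyMeasurable (fun t : ℝ => t ^ (α - 1) * (l + t) ^ (-β))
      (volume.restrict (Ioi 0)) := by fun_prop
  have hβ : -β ≤ 0 := by linarith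
  rw [← Ioc_union_Ioi_eq_Ioi zero_le_one]
  refine IntegrableOn.union ?near_zero ?near_infty
  case near_zero =>
    have h : IntegrableOn (fun t : ℝ => l ^ (-β) * t ^ (α - 1)) (Ioc 0 1) := by
      refine Integrable.const_mul ?_ _
      have := intervalIntegral.intervalIntegrable_rpow' (a := 0) (b := 1) (r := α - 1)
        (by linarith)
      rwa [intervalIntegrable_iff, uIoc_of_le zero_le_one] at this
    refine h.mono' (hmeas.mono_set Ioc_subset_Ioi_self) ?_
    filter_upwards [ae_restrict_mem measurableSet_Ioc] with t ht
    have ht0 : 0 < t := ht.1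
    rw [Real.norm_of_nonneg (by positivity), mul_comm]
    exact mul_le_mul_of_nonneg_right
      (Real.rpow_le_rpow_of_nonpos hl (le_add_of_nonneg_right ht0.le) hβ) (by positivity)
  case near_infty =>
    have h : IntegrableOn (fun t : ℝ => t ^ (α - 1 - β)) (Ioi 1) :=
      integrableOn_Ioi_rpow_of_lt (by linarith) one_pos
    refine h.mono' (hmeas.mono_set (Ioi_subset_Ioi zero_le_one)) ?_
    filter_upwards [ae_restrict_mem measurableSet_Ioi] with t (ht : 1 < t)
    have ht0 : 0 < t := one_pos.trans ht
    rw [Real.norm_of_nonneg (by positivity), sub_eq_add_neg (α - 1), Real.rpow_add ht0]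
    exact mul_le_mul_of_nonneg_left
      (Real.rpow_le_rpow_of_nonpos ht0 (le_add_of_nonneg_left hl.le) hβ) (by positivity)

lemma div_add_rpow_le {x y : ℝ} (hc : 0 < c) (hp : 0 ≤ p) (hx : 0 ≤ x) (hy : 0 ≤ y) :
    y / (c + x) ^ p ≤ c ^ (-p) * y := by
  rw [Real.rpow_neg hc.le, ← div_eq_inv_mul]
  gcongr
  linarith

lemma integrableOn_rpow_div_rpow_mul_rpow_neg {s : ℝ} (hα : 0 < α) (hαβ : α < β) (hc : 0 < c)
    (hp : 0 ≤ p) (hs : 0 ≤ s) (hl : 0 < l) :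
    IntegrableOn (fun t : ℝ => t ^ (α - 1) / (c + s * t) ^ p * (l + t) ^ (-β)) (Ioi 0) := by
  refine ((integrableOn_rpow_mul_add_rpow_neg hα hαβ hl).const_mul (c ^ (-p))).mono'
    (by fun_prop) ?_
  filter_upwards [ae_restrict_mem measurableSet_Ioi] with t (ht : 0 < t)
  rw [Real.norm_of_nonneg (by positivity), ← mul_assoc]
  gcongr
  exact div_add_rpow_le hc hp (by positivity) (by positivity)

lemma integrableOn_betaTypeIntegral (hα : 0 < α) (hαβ : α < β) (hc : 0 < c) (hp : 0 ≤ p)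
    (hl : 0 < l) :
    IntegrableOn (fun t : ℝ => t ^ (α - 1) / (c + t) ^ p * (l + t) ^ (-β)) (Ioi 0) := by
  simpa using integrableOn_rpow_div_rpow_mul_rpow_neg hα hαβ hc hp zero_le_one hl

lemma betaTypeIntegral_pos (hα : 0 < α) (hαβ : α < β) (hc : 0 < c) (hp : 0 ≤ p) (hl : 0 < l) :
    0 < betaTypeIntegral c p β α l := by
  have hpos : ∀ t ∈ Ioi (0 : ℝ), 0 < t ^ (α - 1) / (c + t) ^ p * (l + t) ^ (-β) :=
    fun t (ht : 0 < t) => by positivity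
  rw [betaTypeIntegral, setIntegral_pos_iff_support_of_nonneg_ae
    ((ae_restrict_mem measurableSet_Ioi).mono fun t ht => (hpos t ht).le)
    (integrableOn_betaTypeIntegral hα hαβ hc hp hl),
    inter_eq_right.mpr fun t ht => Function.mem_support.mpr (hpos t ht).ne', Real.volume_Ioi]
  exact ENNReal.zero_lt_top

lemma betaTypeIntegral_eq_rpow_mul (hl : 0 < l) :
    betaTypeIntegral c p β α l =
      l ^ (α - β) * ∫ u in Ioi 0, u ^ (α - 1) / (c + l * u) ^ p * (1 + u) ^ (-β) := by
  set f : ℝ → ℝ := fun t => t ^ (α - 1) / (c + t) ^ p * (l + t) ^ (-β)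
  calc betaTypeIntegral c p β α l = l * ∫ u in Ioi 0, f (l * u) := by
        rw [integral_comp_mul_left_Ioi f 0 hl, mul_zero, smul_eq_mul, mul_inv_cancel_left₀ hl.ne',
          betaTypeIntegral]
    _ = _ := by
        rw [← integral_const_mul, ← integral_const_mul]
        refine setIntegral_congr_fun measurableSet_Ioi fun u (hu : 0 < u) => ?_
        simp only [f]
        rw [Real.mul_rpow hl.le hu.le, show l + l * u = l * (1 + u) by ring,
          Real.mul_rpow hl.le (by positivity), show α - β = 1 + (α - 1) + -β by ring,
          Real.rpow_add hl, Real.rpow_add hl, Real.rpow_one]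
        ring

lemma betaTypeIntegral_add_mul_le {δ : ℝ} (hc : 0 < c) (hp : 0 ≤ p) (hα : 0 < α) (hδ : 0 ≤ δ)
    (hαδβ : α + δ < β) (hl₀ : 0 < l) (hl₁ : l ≤ 1) :
    betaTypeIntegral c p β (α + δ) l * betaTypeIntegral c p β α 1 ≤
      c ^ (-p) * (∫ u in Ioi 0, u ^ (α + δ - 1) * (1 + u) ^ (-β)) * l ^ δ *
        betaTypeIntegral c p β α l := by
  have hαβ : α < β := by linarith
  have hαδ : 0 < α + δ := by linarith
  set J : ℝ → ℝ := fun α' => ∫ u in Ioi 0, u ^ (α' - 1) / (c + l * u) ^ p * (1 + u) ^ (-β)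
  have hJ_upper : J (α + δ) ≤ c ^ (-p) * ∫ u in Ioi 0, u ^ (α + δ - 1) * (1 + u) ^ (-β) := by
    rw [← integral_const_mul]
    refine setIntegral_mono_on
      (integrableOn_rpow_div_rpow_mul_rpow_neg hαδ hαδβ hc hp hl₀.le one_pos)
      ((integrableOn_rpow_mul_add_rpow_neg hαδ hαδβ one_pos).const_mul _) measurableSet_Ioi
      fun u (hu : 0 < u) => ?_
    rw [← mul_assoc]
    exact mul_le_mul_of_nonneg_right (div_add_rpow_le hc hp (by positivity) (by positivity))
      (by positivity)
  have hJ_lower : betaTypeIntegral c p β α 1 ≤ J α := by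
    refine setIntegral_mono_on (integrableOn_betaTypeIntegral hα hαβ hc hp one_pos)
      (integrableOn_rpow_div_rpow_mul_rpow_neg hα hαβ hc hp hl₀.le one_pos) measurableSet_Ioi
      fun u (hu : 0 < u) => ?_
    gcongr
    nlinarith
  have hI₁ : 0 < betaTypeIntegral c p β α 1 := betaTypeIntegral_pos hα hαβ hc hp one_pos
  rw [betaTypeIntegral_eq_rpow_mul hl₀, betaTypeIntegral_eq_rpow_mul hl₀,
    show α + δ - β = δ + (α - β) by ring, Real.rpow_add hl₀]
  calc l ^ δ * l ^ (α - β) * J (α + δ) * betaTypeIntegral c p β α 1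
      ≤ l ^ δ * l ^ (α - β) * (c ^ (-p) * ∫ u in Ioi 0, u ^ (α + δ - 1) * (1 + u) ^ (-β)) * J α := by
        have : 0 ≤ ∫ u in Ioi (0 : ℝ), u ^ (α + δ - 1) * (1 + u) ^ (-β) :=
          setIntegral_nonneg measurableSet_Ioi fun u (hu : 0 < u) => by positivity
        gcongr
    _ = _ := by ring

lemma isBigO_betaTypeIntegral_add {δ : ℝ} (hc : 0 < c) (hp : 0 ≤ p) (hα : 0 < α) (hδ : 0 ≤ δ)
    (hαδβ : α + δ < β) :
    (fun l => betaTypeIntegral c p β (α + δ) l) =O[𝓝[>] 0]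
      fun l => l ^ δ * betaTypeIntegral c p β α l := by
  have hαβ : α < β := by linarith
  have hI₁ : 0 < betaTypeIntegral c p β α 1 := betaTypeIntegral_pos hα hαβ hc hp one_pos
  refine .of_bound (c ^ (-p) * (∫ u in Ioi 0, u ^ (α + δ - 1) * (1 + u) ^ (-β)) /
    betaTypeIntegral c p β α 1) ?_
  filter_upwards [Ioc_mem_nhdsGT one_pos] with l ⟨hl₀, hl₁⟩
  rw [Real.norm_of_nonneg (betaTypeIntegral_pos (by linarith) hαδβ hc hp hl₀).le,
    Real.norm_of_nonneg (mul_nonneg (by positivity) (betaTypeIntegral_pos hα hαβ hc hp hl₀).le),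
    div_mul_eq_mul_div, le_div_iff₀ hI₁, ← mul_assoc]
  exact betaTypeIntegral_add_mul_le hc hp hα hδ hαδβ hl₀ hl₁

lemma norm_integral_rpow_div_add_mul_le {γ C : ℝ} (hγ : 0 < γ) (hC : 0 ≤ C) (hα : 0 < α)
    (hαCβ : α + C < β) (hc : 0 < c) (hp : 0 ≤ p) (hl : 0 < l) :
    ‖∫ t in Ioi 0, (t / (γ + t)) ^ C * (t ^ (α - 1) / (c + t) ^ p) * (l + t) ^ (-β)‖ ≤
      γ ^ (-C) * betaTypeIntegral c p β (α + C) l := by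
  rw [betaTypeIntegral, ← integral_const_mul]
  refine norm_integral_le_of_norm_le
    ((integrableOn_betaTypeIntegral (by linarith) hαCβ hc hp hl).const_mul _) ?_
  filter_upwards [ae_restrict_mem measurableSet_Ioi] with t (ht : 0 < t)
  have hweight : (t / (γ + t)) ^ C ≤ γ ^ (-C) * t ^ C := by
    rw [Real.rpow_neg hγ.le, ← div_eq_inv_mul, ← Real.div_rpow ht.le hγ.le]
    gcongr
    linarith
  rw [Real.norm_of_nonneg (by positivity), show α + C - 1 = C + (α - 1) by ring,
    Real.rpow_add ht]
  calc (t / (γ + t)) ^ C * (t ^ (α - 1) / (c + t) ^ p) * (l + t) ^ (-β)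
      ≤ γ ^ (-C) * t ^ C * (t ^ (α - 1) / (c + t) ^ p) * (l + t) ^ (-β) := by gcongr
    _ = _ := by ring

end

theorem stmt_13 (a b c γ A B : ℝ) (ha : 0 < a) (hb : 0 < b) (hc : 0 < c) (hγ : 0 < γ)
    (hA : 0 < A) (hB : A < B) :
    Filter.Tendsto (fun lam : ℝ =>
        (∫ t in Set.Ioi (0:ℝ),
            (t / (γ + t)) ^ (min 1 (B - A) / 2) * (t ^ (A - 1) / (c + t) ^ (a + b))
              * (lam + t) ^ (-B))
          / (∫ t in Set.Ioi (0:ℝ), t ^ (A - 1) / (c + t) ^ (a + b) * (lam + t) ^ (-B)))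
      (nhdsWithin 0 (Set.Ioi 0)) (nhds 0) := by
  set C := min 1 (B - A) / 2 with hC_def
  have hC : 0 < C := half_pos (lt_min one_pos (sub_pos.mpr hB))
  have hACB : A + C < B := by linarith [min_le_right 1 (B - A)]
  have hp : 0 ≤ a + b := by positivity
  have hnum : (fun l => ∫ t in Ioi (0 : ℝ),
      (t / (γ + t)) ^ C * (t ^ (A - 1) / (c + t) ^ (a + b)) * (l + t) ^ (-B)) =O[𝓝[>] 0]
      fun l => betaTypeIntegral c (a + b) B (A + C) l :=
    .of_bound _ <| eventually_mem_nhdsWithin.mono fun l (hl : 0 < l) =>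
      (norm_integral_rpow_div_add_mul_le hγ hC.le hA hACB hc hp hl).trans
        (mul_le_mul_of_nonneg_left (Real.le_norm_self _) (by positivity))
  have hden : ∀ᶠ l in 𝓝[>] (0 : ℝ), betaTypeIntegral c (a + b) B A l ≠ 0 :=
    eventually_mem_nhdsWithin.mono fun l hl => (betaTypeIntegral_pos hA hB hc hp hl).ne'
  have hrpow : Tendsto (fun l : ℝ => l ^ C) (𝓝[>] 0) (𝓝 0) := by
    simpa [Real.zero_rpow hC.ne'] using
      (Real.continuousAt_rpow_const 0 C (Or.inr hC.le)).tendsto.mono_left nhdsWithin_le_nhds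
  simp only [div_eq_mul_inv]
  refine ((hnum.trans (isBigO_betaTypeIntegral_add hc hp hA hC.le hACB)).mul
    (isBigO_refl (fun l => (betaTypeIntegral c (a + b) B A l)⁻¹) _)).trans_tendsto ?_
  refine hrpow.congr' (hden.mono fun l hl => ?_)
  exact (mul_inv_cancel_right₀ hl _).symm
end

section
/- For all s ≥ 1 and r > 1 and x ∈ ℝ: e^{−x²/2}/(r² + (x−s)²) · 1(x < s/2) ≤ 5 · ( sup_{s̃ ≥ 1} [∫_{−∞}^{s̃/2} e^{−u²/2} du / ∫_{0}^{s̃/2} e^{−u²/2} du] ) · ( ∫_{0}^{s/2} e^{−u²/2}/(r²+(u−s)²) du ) · TN(x), where TN is the density of the standard normal truncated to (−∞, s/2). -/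
/-!
On `x < s/2` the distance `|x - s|` is at least `s/2`, so
`r² + (x - s)² ≥ (r² + s²)/4`, while on `(0, s/2)` it is at most `s`, so the integral
`∫₀^{s/2} e^{-u²/2}/(r² + (u - s)²)` is at least `(∫₀^{s/2} e^{-u²/2}) / (r² + s²)`.
Combining the two bounds gives the claim with constant `4 · J/J₀`, where `J/J₀` is the ratio of
Gaussian integrals at `s`; this ratio is bounded uniformly for `s ≥ 1` by
`(∫ e^{-u²/2}) / ∫₀^{1/2} e^{-u²/2}`, so it is dominated by the supremum.
-/

open MeasureTheory Real Set

lemma integrable_exp_neg_sq_div_two : Integrable fun u : ℝ => exp (-u ^ 2 / 2) := by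
  convert integrable_exp_neg_mul_sq (b := (1 / 2 : ℝ)) (by norm_num) using 2 with u
  ring_nf

lemma setIntegral_exp_neg_sq_div_two_pos {A : Set ℝ} (hA : volume A ≠ 0) :
    0 < ∫ u in A, exp (-u ^ 2 / 2) := by
  rw [setIntegral_pos_iff_support_of_nonneg_ae
    (Filter.Eventually.of_forall fun u => (exp_pos _).le)
    integrable_exp_neg_sq_div_two.integrableOn]
  have hsupp : Function.support (fun u : ℝ => exp (-u ^ 2 / 2)) = univ :=
    Function.support_eq_univ fun u => (exp_pos _).ne'
  rwa [hsupp, univ_inter, pos_iff_ne_zero]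

lemma bddAbove_range_integral_Iio_div_integral_Ioo :
    BddAbove (range fun t : {u : ℝ // 1 ≤ u} =>
      (∫ u in Iio ((t : ℝ) / 2), exp (-u ^ 2 / 2))
        / ∫ u in Ioo (0 : ℝ) ((t : ℝ) / 2), exp (-u ^ 2 / 2)) := by
  have hnonneg : 0 ≤ᵐ[volume] fun u : ℝ => exp (-u ^ 2 / 2) :=
    Filter.Eventually.of_forall fun u => (exp_pos _).le
  refine ⟨(∫ u, exp (-u ^ 2 / 2)) / ∫ u in Ioo (0 : ℝ) (1 / 2), exp (-u ^ 2 / 2), ?_⟩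
  rintro _ ⟨⟨t, ht⟩, rfl⟩
  refine div_le_div₀ (integral_nonneg fun u => (exp_pos _).le)
    (setIntegral_le_integral integrable_exp_neg_sq_div_two hnonneg)
    (setIntegral_exp_neg_sq_div_two_pos (by simp)) ?_
  exact setIntegral_mono_set integrable_exp_neg_sq_div_two.integrableOn (ae_restrict_of_ae hnonneg)
    (Filter.Eventually.of_forall (Ioo_subset_Ioo le_rfl (by linarith)))

lemma add_sq_div_four_le_add_sq_sub {r s x : ℝ} (hs : 0 ≤ s) (hx : x < s / 2) :
    (r ^ 2 + s ^ 2) / 4 ≤ r ^ 2 + (x - s) ^ 2 := by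
  nlinarith [sq_nonneg r]

lemma integral_Ioo_div_le_integral_Ioo_div_add_sq_sub (r : ℝ) {s : ℝ} (hs : 0 < s) :
    (∫ u in Ioo (0 : ℝ) (s / 2), exp (-u ^ 2 / 2)) / (r ^ 2 + s ^ 2)
      ≤ ∫ u in Ioo (0 : ℝ) (s / 2), exp (-u ^ 2 / 2) / (r ^ 2 + (u - s) ^ 2) := by
  have hden : ∀ u ∈ Icc (0 : ℝ) (s / 2), 0 < r ^ 2 + (u - s) ^ 2 := fun u hu => by
    nlinarith [sq_nonneg r, hu.2]
  have hint : IntegrableOn (fun u => exp (-u ^ 2 / 2) / (r ^ 2 + (u - s) ^ 2)) (Icc 0 (s / 2)) :=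
    ContinuousOn.integrableOn_Icc <|
      ContinuousOn.div (by fun_prop) (by fun_prop) fun u hu => (hden u hu).ne'
  rw [← integral_div]
  refine setIntegral_mono_on (integrable_exp_neg_sq_div_two.integrableOn.div_const _)
    (hint.mono_set Ioo_subset_Icc_self) measurableSet_Ioo fun u hu => ?_
  refine div_le_div_of_nonneg_left (exp_pos _).le (hden u (Ioo_subset_Icc_self hu)) ?_
  nlinarith [hu.1, hu.2]

theorem stmt_14_general (s r : ℝ) (hs : 1 ≤ s) (x : ℝ) :
    Set.indicator (Set.Iio (s/2)) (fun x => Real.exp (-x^2/2) / (r^2 + (x - s)^2)) x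
      ≤ 5 * (⨆ t : {u : ℝ // 1 ≤ u}, (∫ u in Set.Iio ((t:ℝ)/2), Real.exp (-u^2/2))
              / (∫ u in Set.Ioo (0:ℝ) ((t:ℝ)/2), Real.exp (-u^2/2)))
          * (∫ u in Set.Ioo (0:ℝ) (s/2), Real.exp (-u^2/2) / (r^2 + (u - s)^2))
          * (Set.indicator (Set.Iio (s/2)) (fun x => Real.exp (-x^2/2)) x
              / ∫ u in Set.Iio (s/2), Real.exp (-u^2/2)) := by
  by_cases hx : x ∈ Iio (s / 2)
  swap
  · simp [indicator_of_notMem hx]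
  rw [indicator_of_mem hx, indicator_of_mem hx]
  set S := ⨆ t : {u : ℝ // 1 ≤ u}, (∫ u in Iio ((t : ℝ) / 2), exp (-u ^ 2 / 2))
    / ∫ u in Ioo (0 : ℝ) ((t : ℝ) / 2), exp (-u ^ 2 / 2)
  set J := ∫ u in Iio (s / 2), exp (-u ^ 2 / 2)
  set J₀ := ∫ u in Ioo (0 : ℝ) (s / 2), exp (-u ^ 2 / 2)
  set I := ∫ u in Ioo (0 : ℝ) (s / 2), exp (-u ^ 2 / 2) / (r ^ 2 + (u - s) ^ 2)
  have hJ : 0 < J := setIntegral_exp_neg_sq_div_two_pos (by simp)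
  have hJ₀ : 0 < J₀ := setIntegral_exp_neg_sq_div_two_pos (by simp; linarith)
  have hratio : J / J₀ ≤ S := le_ciSup bddAbove_range_integral_Iio_div_integral_Ioo ⟨s, hs⟩
  have hI : J₀ / (r ^ 2 + s ^ 2) ≤ I :=
    integral_Ioo_div_le_integral_Ioo_div_add_sq_sub r (by linarith)
  have hden : (r ^ 2 + s ^ 2) / 4 ≤ r ^ 2 + (x - s) ^ 2 :=
    add_sq_div_four_le_add_sq_sub (by linarith) (mem_Iio.mp hx)
  calc exp (-x ^ 2 / 2) / (r ^ 2 + (x - s) ^ 2)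
      ≤ exp (-x ^ 2 / 2) / ((r ^ 2 + s ^ 2) / 4) := by gcongr
    _ = 4 * (J₀ / (r ^ 2 + s ^ 2)) / J₀ * exp (-x ^ 2 / 2) := by field_simp
    _ ≤ 4 * I / J₀ * exp (-x ^ 2 / 2) := by gcongr
    _ = 4 * (J / J₀) * I * (exp (-x ^ 2 / 2) / J) := by field_simp
    _ ≤ 5 * S * I * (exp (-x ^ 2 / 2) / J) := by
      have : 0 ≤ I := (div_nonneg hJ₀.le (by positivity)).trans hI
      have : 0 ≤ S := (div_pos hJ hJ₀).le.trans hratio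
      gcongr
      norm_num

theorem stmt_14 (s r : ℝ) (hs : 1 ≤ s) (hr : 1 < r) (x : ℝ) :
    Set.indicator (Set.Iio (s/2)) (fun x => Real.exp (-x^2/2) / (r^2 + (x - s)^2)) x
      ≤ 5 * (⨆ t : {u : ℝ // 1 ≤ u}, (∫ u in Set.Iio ((t:ℝ)/2), Real.exp (-u^2/2))
              / (∫ u in Set.Ioo (0:ℝ) ((t:ℝ)/2), Real.exp (-u^2/2)))
          * (∫ u in Set.Ioo (0:ℝ) (s/2), Real.exp (-u^2/2) / (r^2 + (u - s)^2))
          * (Set.indicator (Set.Iio (s/2)) (fun x => Real.exp (-x^2/2)) x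
              / ∫ u in Set.Iio (s/2), Real.exp (-u^2/2)) :=
  stmt_14_general s r hs x
end
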